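/- arXiv:math/0406384 — 5 statements merged into one kernel-verified Lean document; each statement's English description precedes it below -/
import Mathlib

section
/- If X is an irreducible affine scheme and D ⊆ X is the support of an effective Cartier divisor, then the open complement X \ D is affine. -/
open CategoryTheory AlgebraicGeometry TopologicalSpace

universe u

/-- If `X` is an irreducible affine scheme and `D ⊆ X` is the support of an effective Cartier
divisor (a closed subset which is, locally on `X`, the vanishing locus of a single
regular (non-zero-divisor) section), then the open complement `X \ D` is affine. -/
theorem complement_of_effective_Cartier_divisor_isAffine
    (X : Scheme.{u}) [IsAffine X] [IrreducibleSpace X]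
    (D : Set X) (hD : IsClosed D)
    (hCartier : ∀ x : X, ∃ U : X.Opens, x ∈ U ∧ ∃ f : Γ(X, U),
      f ∈ nonZeroDivisors Γ(X, U) ∧
      D ∩ (U : Set X) = (U : Set X) \ (X.basicOpen f : Set X)) :
    IsAffineOpen ⟨Dᶜ, hD.isOpen_compl⟩ := by
  set U : X.Opens := ⟨Dᶜ, hD.isOpen_compl⟩ with hU
  -- Around every point there is an affine open `V` such that `U ⊓ V` is affine.
  have key : ∀ x : X, ∃ V : X.Opens, x ∈ V ∧ IsAffineOpen V ∧ IsAffineOpen (U ⊓ V) := by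
    intro x
    obtain ⟨W, hxW, f, -, hDW⟩ := hCartier x
    obtain ⟨a, haW, hxa⟩ :=
      (isAffineOpen_top X).exists_basicOpen_le (⟨x, hxW⟩ : W) trivial
    have hVaff : IsAffineOpen (X.basicOpen a) := (isAffineOpen_top X).basicOpen a
    refine ⟨X.basicOpen a, hxa, hVaff, ?_⟩
    have hg : X.basicOpen (X.presheaf.map (homOfLE haW).op f) = X.basicOpen a ⊓ X.basicOpen f :=
      X.basicOpen_res _ _
    have hle : (X.basicOpen f : Set X) ⊆ (W : Set X) := X.basicOpen_le f
    have heq : U ⊓ X.basicOpen a = X.basicOpen (X.presheaf.map (homOfLE haW).op f) := by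
      rw [hg]
      ext y
      simp only [SetLike.mem_coe, SetLike.mem_coe]
      constructor
      · rintro ⟨hyU, hyV⟩
        refine ⟨hyV, ?_⟩
        by_contra hyf
        have hyD : y ∈ D ∩ (W : Set X) := by
          rw [hDW]
          exact ⟨haW hyV, hyf⟩
        exact hyU hyD.1
      · rintro ⟨hyV, hyf⟩
        refine ⟨?_, hyV⟩
        intro hyD
        have : y ∈ D ∩ (W : Set X) := ⟨hyD, haW hyV⟩
        rw [hDW] at this
        exact this.2 hyf
    rw [heq]
    exact hVaff.basicOpen _
  choose V hxV hVaff hUV using key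
  have hVtop : (⨆ x, V x : X.Opens) = ⊤ := by
    rw [eq_top_iff]
    exact fun y _ ↦ Opens.mem_iSup.mpr ⟨y, hxV y⟩
  have hι : IsAffineHom U.ι := by
    apply @IsZariskiLocalAtTarget.of_iSup_eq_top @IsAffineHom
      (@HasAffineProperty.instIsZariskiLocalAtTarget _ _
        instHasAffinePropertyIsAffineHomIsAffine) _ _ _ _ V hVtop
    intro x
    have hA : IsAffine (V x).toScheme := hVaff x
    have hsrc : IsAffineOpen (U.ι ⁻¹ᵁ V x) := by
      rw [← U.ι.isAffineOpen_iff_of_isOpenImmersion,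
        U.ι.image_preimage_eq_opensRange_inf, U.opensRange_ι]
      exact hUV x
    have : IsAffine (U.ι ⁻¹ᵁ V x).toScheme := hsrc
    rw [@HasAffineProperty.iff_of_isAffine @IsAffineHom (fun X _ _ _ ↦ IsAffine X)
      instHasAffinePropertyIsAffineHomIsAffine]
    exact this
  exact isAffine_of_isAffineHom U.ι
end

section
/- Every separated scheme of finite type over a field admits an affine stratification; in fact, if U_0, …, U_n is a finite cover by open affine subsets, then the locally closed pieces Y_k = U_k \ (U_0 ∪ ⋯ ∪ U_{k-1}) are affine and form an affine stratification of length at most n. -/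
open CategoryTheory AlgebraicGeometry TopologicalSpace

universe u

/-- `S` is the underlying set of an affine locally closed subscheme of `X`:
there is an immersion from an affine scheme onto `S`. -/
def IsAffineLocallyClosed (X : Scheme.{u}) (S : Set X) : Prop :=
  ∃ (A : Scheme.{u}) (f : A ⟶ X), IsAffine A ∧ IsImmersion f ∧ Set.range f.base = S

/-- An affine stratification of a scheme `X`: a finite decomposition of `X` into disjoint
nonempty locally closed affine pieces `piece i`, each with a level `level i : ℕ`, such that
the frontier of each piece is contained in the union of the pieces of strictly larger level. -/
structure AffineStratification (X : Scheme.{u}) where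
  ι : Type
  [finite : Finite ι]
  level : ι → ℕ
  piece : ι → Set X
  nonempty : ∀ i, (piece i).Nonempty
  affine : ∀ i, IsAffineLocallyClosed X (piece i)
  pairwiseDisjoint : Pairwise fun i j => Disjoint (piece i) (piece j)
  iUnion_piece : ⋃ i, piece i = Set.univ
  frontier_subset : ∀ i, closure (piece i) \ piece i ⊆ ⋃ j ∈ {j | level i < level j}, piece j

/-- The length of an affine stratification: the largest occurring level. -/
noncomputable def AffineStratification.length {X : Scheme.{u}} (S : AffineStratification X) : ℕ∞ :=
  ⨆ i, (S.level i : ℕ∞)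

/-- The affine stratification number `asn X` of a scheme `X`: the minimal length of an
affine stratification of `X` (and `⊤` if there is none). -/
noncomputable def affineStratificationNumber (X : Scheme.{u}) : ℕ∞ :=
  ⨅ S : AffineStratification X, S.length

/-- A closed subset of an affine scheme is the range of a closed immersion
from an affine scheme (the reduced induced closed subscheme). -/
lemma exists_closedImm_of_isClosed (A : Scheme.{u}) [IsAffine A] (Z : Set A)
    (hZ : IsClosed Z) :
    ∃ (B : Scheme.{u}) (g : B ⟶ A), IsAffine B ∧ IsClosedImmersion g ∧
      Set.range g.base = Z := by
  let e := A.isoSpec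
  let Z' : Set (Spec Γ(A, ⊤)) := e.inv.base ⁻¹' Z
  have hZ' : IsClosed Z' := hZ.preimage e.inv.base.hom.continuous
  let I := PrimeSpectrum.vanishingIdeal Z'
  refine ⟨Spec (CommRingCat.of (Γ(A, ⊤) ⧸ I)),
    Spec.map (CommRingCat.ofHom (Ideal.Quotient.mk I)) ≫ e.inv, inferInstance,
    inferInstance, ?_⟩
  have h1 : Set.range (Spec.map (CommRingCat.ofHom (Ideal.Quotient.mk I))).base
      = PrimeSpectrum.zeroLocus (I : Set Γ(A, ⊤)) := by
    rw [Spec.map_base]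
    exact (range_comap_of_surjective _ (Ideal.Quotient.mk I)
      Ideal.Quotient.mk_surjective).trans (by rw [Ideal.mk_ker])
  have h2 : PrimeSpectrum.zeroLocus (I : Set Γ(A, ⊤)) = Z' := by
    exact (PrimeSpectrum.zeroLocus_vanishingIdeal_eq_closure Z').trans hZ'.closure_eq
  rw [Scheme.Hom.comp_base, TopCat.coe_comp, Set.range_comp, h1, h2]
  have hsurj : Function.Surjective e.inv.base :=
    (TopCat.homeoOfIso (Scheme.forgetToTop.mapIso e.symm)).surjective
  exact Set.image_preimage_eq _ hsurj

/-- Every separated scheme of finite type over a field admits an affine stratification: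
if `U 0, …, U n` is a finite cover by open affine subsets, then the locally closed pieces
`Y j = U j \ (U 0 ∪ ⋯ ∪ U (j-1))` are affine, pairwise disjoint, cover `X`, and satisfy
the frontier condition of an affine stratification with levels `j`; in particular
`asn X ≤ n`. -/
theorem affineStratification_of_affine_cover
    (X : Scheme.{u}) [X.IsSeparated]
    (k : Type u) [Field k] (sX : X ⟶ Spec (CommRingCat.of k)) [LocallyOfFiniteType sX]
    (n : ℕ) (U : Fin (n + 1) → X.Opens) (haff : ∀ j, IsAffineOpen (U j))
    (hcov : (⋃ j, (U j : Set X)) = Set.univ) :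
    (∀ j : Fin (n + 1),
      IsAffineLocallyClosed X ((U j : Set X) \ ⋃ (i) (_ : i < j), (U i : Set X))) ∧
    (Pairwise fun a b : Fin (n + 1) =>
      Disjoint ((U a : Set X) \ ⋃ (i) (_ : i < a), (U i : Set X))
        ((U b : Set X) \ ⋃ (i) (_ : i < b), (U i : Set X))) ∧
    ((⋃ j, ((U j : Set X) \ ⋃ (i) (_ : i < j), (U i : Set X))) = Set.univ) ∧
    (∀ a : Fin (n + 1),
      closure ((U a : Set X) \ ⋃ (i) (_ : i < a), (U i : Set X)) \
          ((U a : Set X) \ ⋃ (i) (_ : i < a), (U i : Set X)) ⊆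
        ⋃ (b) (_ : a < b), ((U b : Set X) \ ⋃ (i) (_ : i < b), (U i : Set X))) ∧
    affineStratificationNumber X ≤ n := by
  set Y : Fin (n + 1) → Set X :=
    fun j => (U j : Set X) \ ⋃ (i) (_ : i < j), (U i : Set X) with hY
  -- membership of points of the open subscheme
  have hmemU : ∀ (j : Fin (n + 1)) (x : (U j).toScheme), (U j).ι.base x ∈ (U j : Set X) := by
    intro j x
    rw [← Scheme.Opens.range_ι]
    exact Set.mem_range_self x
  -- 1: each piece is affine locally closed
  have haffY : ∀ j, IsAffineLocallyClosed X (Y j) := by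
    intro j
    haveI : IsAffine (U j).toScheme := haff j
    set Z : Set (U j).toScheme := (U j).ι.base ⁻¹' (Y j) with hZ
    have hZeq : Z = (U j).ι.base ⁻¹' ((⋃ (i) (_ : i < j), (U i : Set X))ᶜ) := by
      ext x
      simp only [hZ, hY, Set.mem_preimage, Set.mem_diff, Set.mem_compl_iff]
      exact ⟨fun h => h.2, fun h => ⟨hmemU j x, h⟩⟩
    have hZclosed : IsClosed Z := by
      rw [hZeq]
      exact ((isOpen_iUnion fun i => isOpen_iUnion fun _ => (U i).2).isClosed_compl).preimage
        (U j).ι.base.hom.continuous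
    obtain ⟨B, g, hB, hg, hrange⟩ := exists_closedImm_of_isClosed _ Z hZclosed
    refine ⟨B, g ≫ (U j).ι, hB, inferInstance, ?_⟩
    rw [Scheme.Hom.comp_base, TopCat.coe_comp, Set.range_comp, hrange, hZ,
      Set.image_preimage_eq_inter_range, Scheme.Opens.range_ι]
    exact Set.inter_eq_left.mpr Set.diff_subset
  -- 2: pairwise disjoint
  have hkey : ∀ a b : Fin (n + 1), a < b → Disjoint (Y a) (Y b) := by
    intro a b hab
    rw [Set.disjoint_left]
    intro x hxa hxb
    exact hxb.2 (Set.mem_iUnion.2 ⟨a, Set.mem_iUnion.2 ⟨hab, hxa.1⟩⟩)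
  have hdisj : Pairwise fun a b : Fin (n + 1) => Disjoint (Y a) (Y b) := by
    intro a b hab
    rcases hab.lt_or_gt with h | h
    · exact hkey a b h
    · exact (hkey b a h).symm
  -- 3: the pieces cover
  have hcovY : ⋃ j, Y j = Set.univ := by
    ext x
    simp only [Set.mem_univ, iff_true]
    have hx : x ∈ ⋃ j, (U j : Set X) := hcov.symm ▸ Set.mem_univ x
    obtain ⟨j0, hj0⟩ := Set.mem_iUnion.mp hx
    obtain ⟨j, hj, hmin⟩ := wellFounded_lt.has_min {j : Fin (n + 1) | x ∈ U j} ⟨j0, hj0⟩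
    refine Set.mem_iUnion.2 ⟨j, hj, fun hmem => ?_⟩
    obtain ⟨i, hmem⟩ := Set.mem_iUnion.mp hmem
    obtain ⟨hij, hxi⟩ := Set.mem_iUnion.mp hmem
    exact hmin i hxi hij
  -- 4: frontier condition
  have hfront : ∀ a : Fin (n + 1),
      closure (Y a) \ Y a ⊆ ⋃ (b) (_ : a < b), Y b := by
    intro a x hx
    have hclos1 : closure (Y a) ⊆ (⋃ (i) (_ : i < a), (U i : Set X))ᶜ :=
      closure_minimal (fun y hy => hy.2)
        (isOpen_iUnion fun i => isOpen_iUnion fun _ => (U i).2).isClosed_compl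
    have hxnot : x ∉ ⋃ (i) (_ : i < a), (U i : Set X) := hclos1 hx.1
    have hxa : x ∉ (U a : Set X) := fun h => hx.2 ⟨h, hxnot⟩
    have : x ∈ ⋃ j, Y j := hcovY ▸ Set.mem_univ x
    obtain ⟨c, hc⟩ := Set.mem_iUnion.mp this
    have hca : a < c := by
      rcases lt_trichotomy a c with h | h | h
      · exact h
      · exact absurd (h ▸ hc) hx.2
      · exact absurd (Set.mem_iUnion.2 ⟨c, Set.mem_iUnion.2 ⟨h, hc.1⟩⟩) hxnot
    exact Set.mem_iUnion.2 ⟨c, Set.mem_iUnion.2 ⟨hca, hc⟩⟩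
  refine ⟨haffY, hdisj, hcovY, hfront, ?_⟩
  -- 5: the stratification number bound
  let S : AffineStratification X :=
    { ι := {j : Fin (n + 1) // (Y j).Nonempty}
      finite := inferInstance
      level := fun j => (j.1 : ℕ)
      piece := fun j => Y j.1
      nonempty := fun j => j.2
      affine := fun j => haffY j.1
      pairwiseDisjoint := fun i j hij => hdisj (fun h => hij (Subtype.ext h))
      iUnion_piece := by
        ext x
        simp only [Set.mem_univ, iff_true]
        have : x ∈ ⋃ j, Y j := hcovY ▸ Set.mem_univ x
        obtain ⟨j, hj⟩ := Set.mem_iUnion.mp this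
        exact Set.mem_iUnion.2 ⟨⟨j, ⟨x, hj⟩⟩, hj⟩
      frontier_subset := by
        intro i x hx
        obtain ⟨b, hb⟩ := Set.mem_iUnion.mp (hfront i.1 hx)
        obtain ⟨hib, hxb⟩ := Set.mem_iUnion.mp hb
        exact Set.mem_iUnion₂.2 ⟨⟨b, ⟨x, hxb⟩⟩, Fin.lt_iff_val_lt_val.mp hib, hxb⟩ }
  refine le_trans (iInf_le _ S) ?_
  refine iSup_le fun i => ?_
  exact_mod_cast Fin.is_le i.1
end

section
/- Let {Y_{k,i}} be an affine stratification of a separated scheme X and let Z_k = ∪_i Y_{k,i}. Then each Z_k is a locally closed affine subscheme of X, i.e., Z_k is open and dense in its closure and is affine. -/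
open CategoryTheory AlgebraicGeometry TopologicalSpace

universe u

open CategoryTheory.Limits

set_option linter.unusedSectionVars false

section TopAux

open Set

variable {α : Type*} [TopologicalSpace α] {ι : Type*} [Finite ι]
  {level : ι → ℕ} {piece : ι → Set α}

lemma strat_closure_piece_subset
    (hfront : ∀ i, closure (piece i) \ piece i ⊆ ⋃ j ∈ {j | level i < level j}, piece j)
    (i : ι) :
    closure (piece i) ⊆ piece i ∪ ⋃ j ∈ {j | level i < level j}, piece j := by
  intro x hx
  by_cases h : x ∈ piece i
  · exact Or.inl h
  · exact Or.inr (hfront i ⟨hx, h⟩)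

lemma strat_closure_biUnion_subset
    (hfront : ∀ i, closure (piece i) \ piece i ⊆ ⋃ j ∈ {j | level i < level j}, piece j)
    (k : ℕ) (s : Set ι) (hs : ∀ j ∈ s, level j = k) :
    closure (⋃ j ∈ s, piece j) ⊆
      (⋃ j ∈ s, piece j) ∪ ⋃ j ∈ {j | k < level j}, piece j := by
  rw [(Set.toFinite s).closure_biUnion]
  intro x hx
  simp only [mem_iUnion, exists_prop] at hx
  obtain ⟨i, hi, hxi⟩ := hx
  rcases strat_closure_piece_subset hfront i hxi with h | h
  · exact Or.inl (Set.mem_biUnion hi h)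
  · simp only [mem_iUnion, exists_prop] at h
    obtain ⟨m, hm, hxm⟩ := h
    exact Or.inr (Set.mem_biUnion (by simpa [hs i hi] using hm) hxm)

lemma strat_isClosed_higher
    (hfront : ∀ i, closure (piece i) \ piece i ⊆ ⋃ j ∈ {j | level i < level j}, piece j)
    (k : ℕ) :
    IsClosed (⋃ j ∈ {j | k < level j}, piece j) := by
  apply isClosed_of_closure_subset
  rw [(Set.toFinite _).closure_biUnion]
  intro x hx
  simp only [mem_iUnion, exists_prop] at hx
  obtain ⟨j, hj, hxj⟩ := hx
  rcases strat_closure_piece_subset hfront j hxj with h | h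
  · exact Set.mem_biUnion hj h
  · simp only [mem_iUnion, exists_prop] at h
    obtain ⟨m, hm, hxm⟩ := h
    have hj' : k < level j := hj
    have hm' : level j < level m := hm
    exact Set.mem_biUnion (show m ∈ {j | k < level j} from lt_trans hj' hm') hxm

lemma strat_disjoint_higher
    (hdisj : Pairwise fun i j => Disjoint (piece i) (piece j))
    (k : ℕ) (s : Set ι) (hs : ∀ j ∈ s, level j = k) :
    Disjoint (⋃ j ∈ s, piece j) (⋃ j ∈ {j | k < level j}, piece j) := by
  rw [Set.disjoint_left]
  intro x hx hx'
  simp only [mem_iUnion, exists_prop] at hx hx'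
  obtain ⟨i, hi, hxi⟩ := hx
  obtain ⟨j, hj, hxj⟩ := hx'
  have hne : i ≠ j := by
    rintro rfl
    have hj' : k < level i := hj
    exact absurd (hs i hi) (ne_of_gt hj')
  exact Set.disjoint_left.mp (hdisj hne) hxi hxj

end TopAux

lemma isImmersion_of_isEmpty {X Y : Scheme.{u}} (f : X ⟶ Y) [IsEmpty X] : IsImmersion f := by
  refine { stalkMap_surjective := fun x => isEmptyElim x,
           isEmbedding := Topology.IsEmbedding.of_subsingleton _,
           isLocallyClosed_range := ?_ }
  rw [Set.range_eq_empty]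
  exact isClosed_empty.isLocallyClosed

lemma Scheme.comp_base_apply {X Y Z : Scheme.{u}} (f : X ⟶ Y) (g : Y ⟶ Z) (x : X) :
    (f ≫ g).base x = g.base (f.base x) := rfl

lemma exists_sigmaι_eq {ι : Type u} (F : ι → Scheme.{u}) (x : (∐ F :)) :
    ∃ i y, (Sigma.ι F i).base y = x := by
  obtain ⟨⟨i, y⟩, rfl⟩ := (sigmaMk F).surjective x
  exact ⟨i, y, by rw [sigmaMk_mk]⟩

/-- Let `{Y_{k,i}}` be an affine stratification of a separated scheme `X` (of finite type
over a field) and let `Z_k` be the union of all pieces of level `k`.  Then each `Z_k` is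
locally closed (open and dense in its closure) and is the underlying set of an affine
locally closed subscheme of `X`. -/
theorem union_of_level_pieces_isAffineLocallyClosed
    (X : Scheme.{u}) [X.IsSeparated]
    (kf : Type u) [Field kf] (sX : X ⟶ Spec (CommRingCat.of kf)) [LocallyOfFiniteType sX]
    (S : AffineStratification X) (k : ℕ) :
    IsLocallyClosed (⋃ i ∈ {i | S.level i = k}, S.piece i) ∧
      IsAffineLocallyClosed X (⋃ i ∈ {i | S.level i = k}, S.piece i) := by
  classical
  have : Finite S.ι := S.finite
  set Z : Set X := ⋃ i ∈ {i | S.level i = k}, S.piece i with hZdef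
  have hZlevels : ∀ j ∈ {i | S.level i = k}, S.level j = k := fun j hj => hj
  set Hs : Set X := ⋃ j ∈ {j | k < S.level j}, S.piece j with hHsdef
  have hHclosed : IsClosed Hs := strat_isClosed_higher S.frontier_subset k
  have hclZ : closure Z ⊆ Z ∪ Hs :=
    strat_closure_biUnion_subset S.frontier_subset k _ hZlevels
  have hdisjZH : Disjoint Z Hs :=
    strat_disjoint_higher S.pairwiseDisjoint k _ hZlevels
  have hZHc : Z ⊆ Hsᶜ := fun x hx => Set.disjoint_left.mp hdisjZH hx
  have hZeq : Z = Hsᶜ ∩ closure Z := by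
    apply Set.eq_of_subset_of_subset
    · exact Set.subset_inter hZHc subset_closure
    · rintro x ⟨hx1, hx2⟩
      rcases hclZ hx2 with h | h
      · exact h
      · exact absurd h hx1
  have hLC : IsLocallyClosed Z :=
    ⟨Hsᶜ, closure Z, hHclosed.isOpen_compl, isClosed_closure, hZeq⟩
  refine ⟨hLC, ?_⟩
  -- choose the affine pieces
  let J := ULift.{u} {i : S.ι // S.level i = k}
  have hA : ∀ j : J, ∃ (A : Scheme.{u}) (g : A ⟶ X),
      IsAffine A ∧ IsImmersion g ∧ Set.range g.base = S.piece j.down.1 :=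
    fun j => S.affine j.down.1
  choose F g hAff hImm hRange using hA
  haveI : ∀ j, IsAffine (F j) := hAff
  let fd : (∐ F) ⟶ X := Sigma.desc g
  have hcomp : ∀ j : J, Sigma.ι F j ≫ fd = g j := fun j => Sigma.ι_desc _ _
  have hbase : ∀ (j : J) (y : F j), fd.base ((Sigma.ι F j).base y) = (g j).base y := by
    intro j y
    rw [← Scheme.comp_base_apply, hcomp]
  have hpieceZ : ∀ j : J, S.piece j.down.1 ⊆ Z := fun j =>
    Set.subset_biUnion_of_mem j.down.2
  have hrange : Set.range fd.base = Z := by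
    apply Set.eq_of_subset_of_subset
    · rintro x ⟨a, rfl⟩
      obtain ⟨j, y, rfl⟩ := exists_sigmaι_eq F a
      rw [hbase]
      exact hpieceZ j (hRange j ▸ Set.mem_range_self y)
    · intro x hx
      simp only [hZdef, Set.mem_iUnion, exists_prop] at hx
      obtain ⟨i, hi, hxi⟩ := hx
      rw [← hRange ⟨⟨i, hi⟩⟩] at hxi
      obtain ⟨y, hy⟩ := hxi
      exact ⟨(Sigma.ι F ⟨⟨i, hi⟩⟩).base y, by rw [hbase]; exact hy⟩
  -- the ambient open subscheme
  let V : X.Opens := ⟨Hsᶜ, hHclosed.isOpen_compl⟩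
  let f' : (∐ F) ⟶ V := IsOpenImmersion.lift V.ι fd
    (by rw [Scheme.Opens.range_ι, hrange]; exact hZHc)
  have hf'fac : f' ≫ V.ι = fd := IsOpenImmersion.lift_fac _ _ _
  -- the separating opens
  let Wcl : J → Set X := fun j =>
    closure (⋃ m ∈ {m | S.level m = k ∧ m ≠ j.down.1}, S.piece m)
  have hWsub : ∀ j : J,
      Wcl j ⊆ (⋃ m ∈ {m | S.level m = k ∧ m ≠ j.down.1}, S.piece m) ∪ Hs :=
    fun j => strat_closure_biUnion_subset S.frontier_subset k _ (fun m hm => hm.1)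
  have hpieceW : ∀ j : J, Disjoint (S.piece j.down.1) (Wcl j) := by
    intro j
    rw [Set.disjoint_left]
    intro x hx hx'
    rcases hWsub j hx' with h | h
    · simp only [Set.mem_iUnion, exists_prop] at h
      obtain ⟨m, hm, hxm⟩ := h
      exact Set.disjoint_left.mp (S.pairwiseDisjoint (Ne.symm hm.2)) hx hxm
    · exact Set.disjoint_left.mp hdisjZH (hpieceZ j hx) h
  let O : J → X.Opens := fun j =>
    ⟨Hsᶜ ∩ (Wcl j)ᶜ, hHclosed.isOpen_compl.inter isClosed_closure.isOpen_compl⟩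
  have hpieceO : ∀ j : J, S.piece j.down.1 ⊆ (O j : Set X) := fun j =>
    Set.subset_inter (fun x hx => hZHc (hpieceZ j hx))
      (fun x hx => Set.disjoint_left.mp (hpieceW j) hx)
  have hOZ : ∀ j : J, (O j : Set X) ∩ Z ⊆ S.piece j.down.1 := by
    rintro j x ⟨hxO, hxZ⟩
    simp only [hZdef, Set.mem_iUnion, exists_prop] at hxZ
    obtain ⟨m, hm, hxm⟩ := hxZ
    by_cases hmj : m = j.down.1
    · subst hmj; exact hxm
    · exact absurd (subset_closure (Set.mem_biUnion (show _ ∈ {m | S.level m = k ∧ m ≠ j.down.1} from ⟨hm, hmj⟩) hxm)) hxO.2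
  let O0 : X.Opens :=
    ⟨Hsᶜ ∩ (closure Z)ᶜ, hHclosed.isOpen_compl.inter isClosed_closure.isOpen_compl⟩
  -- the open cover of V
  let U : Option J → V.toScheme.Opens := fun o => o.elim (V.ι ⁻¹ᵁ O0) (fun j => V.ι ⁻¹ᵁ O j)
  have hUtop : iSup U = ⊤ := by
    rw [eq_top_iff]
    intro x _
    have hxV : V.ι.base x ∈ Hsᶜ := by
      have h := Set.mem_range_self (f := V.ι.base) x
      rwa [Scheme.Opens.range_ι] at h
    by_cases hcl : V.ι.base x ∈ closure Z
    · have hxZ : V.ι.base x ∈ Z := by rw [hZeq]; exact ⟨hxV, hcl⟩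
      have hxZ' := hxZ
      simp only [hZdef, Set.mem_iUnion, exists_prop] at hxZ'
      obtain ⟨i, hi, hxi⟩ := hxZ'
      exact Opens.mem_iSup.mpr ⟨some ⟨⟨i, hi⟩⟩, hpieceO ⟨⟨i, hi⟩⟩ hxi⟩
    · exact Opens.mem_iSup.mpr ⟨none, ⟨hxV, hcl⟩⟩
  haveI : IsImmersion f' := by
    apply IsZariskiLocalAtTarget.of_iSup_eq_top (P := @IsImmersion) U hUtop
    rintro (_ | j)
    · -- the piece away from `Z`: empty preimage
      refine @isImmersion_of_isEmpty _ _ (f' ∣_ U none) ?_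
      constructor
      intro x
      have h0 : (f' ⁻¹ᵁ U none).ι.base x ∈ Set.range (f' ⁻¹ᵁ U none).ι.base := ⟨x, rfl⟩
      rw [Scheme.Opens.range_ι] at h0
      have h1 : V.ι.base (f'.base ((f' ⁻¹ᵁ U none).ι.base x)) ∈ (O0 : Set X) := h0
      rw [← Scheme.comp_base_apply, hf'fac] at h1
      exact h1.2 (subset_closure (hrange ▸ Set.mem_range_self _))
    · -- the piece around `piece j`
      have hpre : f' ⁻¹ᵁ U (some j) = (Sigma.ι F j).opensRange := by
        apply TopologicalSpace.Opens.ext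
        ext a
        constructor
        · intro ha
          have h1 : V.ι.base (f'.base a) ∈ (O j : Set X) := ha
          rw [← Scheme.comp_base_apply, hf'fac] at h1
          obtain ⟨m, y, rfl⟩ := exists_sigmaι_eq F a
          rw [hbase] at h1
          have h2 : (g m).base y ∈ S.piece m.down.1 := hRange m ▸ Set.mem_range_self y
          have h4 : (g m).base y ∈ S.piece j.down.1 := hOZ j ⟨h1, hpieceZ m h2⟩
          have hmj : m = j := by
            by_contra hne
            have hne' : m.down.1 ≠ j.down.1 := by
              intro e
              exact hne (ULift.down_injective (Subtype.ext e))
            exact Set.disjoint_left.mp (S.pairwiseDisjoint hne') h2 h4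
          subst hmj
          exact Set.mem_range_self _
        · rintro ⟨y, rfl⟩
          show V.ι.base (f'.base _) ∈ (O j : Set X)
          rw [← Scheme.comp_base_apply, hf'fac, hbase]
          exact hpieceO j (hRange j ▸ Set.mem_range_self y)
      have key : IsImmersion ((f' ⁻¹ᵁ U (some j)).ι ≫ f') := by
        have hre : Set.range (Sigma.ι F j).base = Set.range (f' ⁻¹ᵁ U (some j)).ι.base := by
          rw [Scheme.Opens.range_ι, hpre]
          rfl
        have he : (IsOpenImmersion.isoOfRangeEq (Sigma.ι F j) (f' ⁻¹ᵁ U (some j)).ι hre).hom ≫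
            (f' ⁻¹ᵁ U (some j)).ι = Sigma.ι F j :=
          IsOpenImmersion.isoOfRangeEq_hom_fac _ _ hre
        haveI : IsImmersion (Sigma.ι F j ≫ f') := by
          have hfac : (Sigma.ι F j ≫ f') ≫ V.ι = g j := by
            rw [Category.assoc, hf'fac, hcomp]
          haveI : IsImmersion ((Sigma.ι F j ≫ f') ≫ V.ι) := hfac ▸ hImm j
          exact IsImmersion.of_comp _ V.ι
        have h2 : IsImmersion
            ((IsOpenImmersion.isoOfRangeEq (Sigma.ι F j) (f' ⁻¹ᵁ U (some j)).ι hre).hom ≫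
              ((f' ⁻¹ᵁ U (some j)).ι ≫ f')) := by
          rw [← Category.assoc, he]
          infer_instance
        haveI := h2
        rw [← Iso.inv_hom_id_assoc
          (IsOpenImmersion.isoOfRangeEq (Sigma.ι F j) (f' ⁻¹ᵁ U (some j)).ι hre)
          ((f' ⁻¹ᵁ U (some j)).ι ≫ f')]
        infer_instance
      have hres : (f' ∣_ U (some j)) ≫ (U (some j)).ι = (f' ⁻¹ᵁ U (some j)).ι ≫ f' :=
        morphismRestrict_ι _ _
      haveI : IsImmersion ((f' ∣_ U (some j)) ≫ (U (some j)).ι) := hres ▸ key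
      exact IsImmersion.of_comp _ (U (some j)).ι
  haveI : IsImmersion fd := hf'fac ▸ (inferInstance : IsImmersion (f' ≫ V.ι))
  exact ⟨∐ F, fd, inferInstance, inferInstance, hrange⟩
end

section
/- If f : Y → X is an affine morphism of separated schemes of finite type over a field, then asn(Y) ≤ asn(X). -/
open CategoryTheory AlgebraicGeometry TopologicalSpace

universe u

/-- Preimage of an affine locally closed set under an affine morphism is
affine locally closed. -/
lemma isAffineLocallyClosed_preimage {X Y : Scheme.{u}} (f : Y ⟶ X) [IsAffineHom f]
    {S : Set X} (hS : IsAffineLocallyClosed X S) :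
    IsAffineLocallyClosed Y (f.base ⁻¹' S) := by
  obtain ⟨A, g, hA, hg, hrange⟩ := hS
  haveI := hA; haveI := hg
  haveI := isAffineHom_isStableUnderBaseChange
  haveI : MorphismProperty.IsStableUnderBaseChangeAlong @IsAffineHom g :=
    ⟨MorphismProperty.IsStableUnderBaseChange.of_isPullback⟩
  haveI : IsAffineHom (Limits.pullback.snd f g) :=
    MorphismProperty.pullback_snd (P := @IsAffineHom) f g inferInstance
  haveI : IsImmersion (Limits.pullback.fst f g) :=
    inferInstance
  refine ⟨Limits.pullback f g, Limits.pullback.fst f g,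
    isAffine_of_isAffineHom (Limits.pullback.snd f g), inferInstance, ?_⟩
  rw [Scheme.Pullback.range_fst, hrange]

/-- The pullback of an affine stratification along an affine morphism. -/
noncomputable def AffineStratification.preimage {X Y : Scheme.{u}} (f : Y ⟶ X) [IsAffineHom f]
    (S : AffineStratification X) : AffineStratification Y where
  ι := {i : S.ι // (f.base ⁻¹' S.piece i).Nonempty}
  finite := by haveI := S.finite; infer_instance
  level i := S.level i.1
  piece i := f.base ⁻¹' S.piece i.1
  nonempty i := i.2
  affine i := isAffineLocallyClosed_preimage f (S.affine i.1)
  pairwiseDisjoint := by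
    intro i j hij
    exact Disjoint.preimage _ (S.pairwiseDisjoint (fun h => hij (Subtype.ext h)))
  iUnion_piece := by
    ext y
    simp only [Set.mem_iUnion, Set.mem_univ, iff_true]
    have : f.base y ∈ ⋃ i, S.piece i := S.iUnion_piece ▸ Set.mem_univ _
    obtain ⟨i, hi⟩ := Set.mem_iUnion.mp this
    exact ⟨⟨i, ⟨y, hi⟩⟩, hi⟩
  frontier_subset := by
    intro i y hy
    have h1 : y ∈ f.base ⁻¹' (closure (S.piece i.1)) :=
      (Continuous.closure_preimage_subset f.continuous _) hy.1
    have h2 : f.base y ∈ closure (S.piece i.1) \ S.piece i.1 := ⟨h1, hy.2⟩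
    have h3 := S.frontier_subset i.1 h2
    simp only [Set.mem_iUnion, Set.mem_setOf_eq] at h3
    obtain ⟨j, hj, hyj⟩ := h3
    exact Set.mem_biUnion (by exact hj : S.level i.1 < S.level j)
      (show y ∈ f.base ⁻¹' S.piece (⟨j, ⟨y, hyj⟩⟩ : {i : S.ι // _}).1 from hyj)

lemma AffineStratification.preimage_length_le {X Y : Scheme.{u}} (f : Y ⟶ X) [IsAffineHom f]
    (S : AffineStratification X) : (S.preimage f).length ≤ S.length :=
  iSup_le fun i => le_iSup (fun j => (S.level j : ℕ∞)) i.1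

/-- If `f : Y ⟶ X` is an affine morphism of separated schemes of finite type over a field,
then `asn Y ≤ asn X`. -/
theorem affineStratificationNumber_le_of_isAffineHom
    (X Y : Scheme.{u}) [X.IsSeparated] [Y.IsSeparated]
    (k : Type u) [Field k]
    (sX : X ⟶ Spec (CommRingCat.of k)) [LocallyOfFiniteType sX]
    (sY : Y ⟶ Spec (CommRingCat.of k)) [LocallyOfFiniteType sY]
    (f : Y ⟶ X) [IsAffineHom f] :
    affineStratificationNumber Y ≤ affineStratificationNumber X := by
  refine le_iInf fun S => ?_
  exact le_trans (iInf_le _ (S.preimage f)) (S.preimage_length_le f)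
end

section
/- For separated schemes X and Y of finite type over a field, asn(X × Y) ≤ asn(X) + asn(Y). -/
open CategoryTheory AlgebraicGeometry TopologicalSpace

universe u

/- ### Auxiliary lemmas -/

private lemma exists_eq_iInf_enat {ι : Sort*} [Nonempty ι] (f : ι → ℕ∞) :
    ∃ i, f i = ⨅ j, f j := by
  obtain ⟨x, ⟨i, rfl⟩, hmin⟩ := wellFounded_lt.has_min (Set.range f) (Set.range_nonempty f)
  exact ⟨i, le_antisymm (le_iInf fun j => not_lt.1 (hmin _ ⟨j, rfl⟩)) (iInf_le _ i)⟩

section Prod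

variable {X Y Z : Scheme.{u}} [IsAffine Z] (sX : X ⟶ Z) (sY : Y ⟶ Z)
  (S : AffineStratification X) (T : AffineStratification Y)

/-- Given affine stratifications of `X` and `Y` over an affine base `Z`, the products of pieces
give an affine stratification of `X ×_Z Y`. -/
noncomputable def AffineStratification.prod :
    AffineStratification (Limits.pullback sX sY) :=
  letI := S.finite
  letI := T.finite
  { ι := {ij : S.ι × T.ι //
      ((Limits.pullback.fst sX sY).base ⁻¹' S.piece ij.1 ∩
        (Limits.pullback.snd sX sY).base ⁻¹' T.piece ij.2).Nonempty}
    finite := inferInstance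
    level := fun ij => S.level ij.1.1 + T.level ij.1.2
    piece := fun ij => (Limits.pullback.fst sX sY).base ⁻¹' S.piece ij.1.1 ∩
      (Limits.pullback.snd sX sY).base ⁻¹' T.piece ij.1.2
    nonempty := fun ij => ij.2
    affine := by
      rintro ⟨⟨i, j⟩, hij⟩
      obtain ⟨A, f, hA, hf, hfr⟩ := S.affine i
      obtain ⟨B, g, hB, hg, hgr⟩ := T.affine j
      refine ⟨Limits.pullback (f ≫ sX) (g ≫ sY),
        Limits.pullback.map (f ≫ sX) (g ≫ sY) sX sY f g (𝟙 _)
          (Category.comp_id _) (Category.comp_id _), inferInstance, ?_, ?_⟩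
      · haveI : MorphismProperty.IsStableUnderComposition @IsImmersion :=
          MorphismProperty.IsMultiplicative.toIsStableUnderComposition
        exact MorphismProperty.pullback_map (P := @IsImmersion) hf hg rfl rfl
      · rw [Scheme.Pullback.range_map, hfr, hgr]
    pairwiseDisjoint := by
      rintro ⟨⟨i, j⟩, hij⟩ ⟨⟨i', j'⟩, hij'⟩ hne
      rw [Set.disjoint_left]
      rintro z ⟨hzi, hzj⟩ ⟨hzi', hzj'⟩
      rcases eq_or_ne i i' with rfl | hii
      · rcases eq_or_ne j j' with rfl | hjj
        · exact hne rfl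
        · exact (T.pairwiseDisjoint hjj).le_bot ⟨hzj, hzj'⟩
      · exact (S.pairwiseDisjoint hii).le_bot ⟨hzi, hzi'⟩
    iUnion_piece := by
      refine Set.eq_univ_of_forall fun z => ?_
      have hx : (Limits.pullback.fst sX sY).base z ∈ ⋃ i, S.piece i :=
        S.iUnion_piece ▸ Set.mem_univ _
      have hy : (Limits.pullback.snd sX sY).base z ∈ ⋃ j, T.piece j :=
        T.iUnion_piece ▸ Set.mem_univ _
      obtain ⟨i, hi⟩ := Set.mem_iUnion.1 hx
      obtain ⟨j, hj⟩ := Set.mem_iUnion.1 hy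
      exact Set.mem_iUnion.2 ⟨⟨(i, j), ⟨z, hi, hj⟩⟩, hi, hj⟩
    frontier_subset := by
      rintro ⟨⟨i, j⟩, hij⟩ z hz
      obtain ⟨hzc, hznot⟩ := hz
      have hp : (Limits.pullback.fst sX sY).base z ∈ closure (S.piece i) :=
        ((closure_mono Set.inter_subset_left).trans
          ((Limits.pullback.fst sX sY).base.hom.continuous.closure_preimage_subset _)) hzc
      have hq : (Limits.pullback.snd sX sY).base z ∈ closure (T.piece j) :=
        ((closure_mono Set.inter_subset_right).trans
          ((Limits.pullback.snd sX sY).base.hom.continuous.closure_preimage_subset _)) hzc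
      have hX : ∃ i', (Limits.pullback.fst sX sY).base z ∈ S.piece i' ∧
          S.level i ≤ S.level i' ∧
          ((Limits.pullback.fst sX sY).base z ∉ S.piece i → S.level i < S.level i') := by
        by_cases h : (Limits.pullback.fst sX sY).base z ∈ S.piece i
        · exact ⟨i, h, le_rfl, fun h' => absurd h h'⟩
        · obtain ⟨i', hi'⟩ := Set.mem_iUnion₂.1 (S.frontier_subset i ⟨hp, h⟩)
          exact ⟨i', hi'.2, hi'.1.le, fun _ => hi'.1⟩
      have hY : ∃ j', (Limits.pullback.snd sX sY).base z ∈ T.piece j' ∧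
          T.level j ≤ T.level j' ∧
          ((Limits.pullback.snd sX sY).base z ∉ T.piece j → T.level j < T.level j') := by
        by_cases h : (Limits.pullback.snd sX sY).base z ∈ T.piece j
        · exact ⟨j, h, le_rfl, fun h' => absurd h h'⟩
        · obtain ⟨j', hj'⟩ := Set.mem_iUnion₂.1 (T.frontier_subset j ⟨hq, h⟩)
          exact ⟨j', hj'.2, hj'.1.le, fun _ => hj'.1⟩
      obtain ⟨i', hi'm, hi'le, hi'lt⟩ := hX
      obtain ⟨j', hj'm, hj'le, hj'lt⟩ := hY
      have hlt : S.level i + T.level j < S.level i' + T.level j' := by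
        by_cases h : (Limits.pullback.fst sX sY).base z ∈ S.piece i
        · have hq' : (Limits.pullback.snd sX sY).base z ∉ T.piece j :=
            fun h' => hznot ⟨h, h'⟩
          exact add_lt_add_of_le_of_lt hi'le (hj'lt hq')
        · exact add_lt_add_of_lt_of_le (hi'lt h) hj'le
      exact Set.mem_iUnion₂.2 ⟨⟨(i', j'), ⟨z, hi'm, hj'm⟩⟩, hlt, hi'm, hj'm⟩ }

lemma AffineStratification.prod_length_le :
    (S.prod sX sY T).length ≤ S.length + T.length := by
  refine iSup_le fun ij => ?_
  show ((S.level ij.1.1 + T.level ij.1.2 : ℕ) : ℕ∞) ≤ _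
  push_cast
  exact add_le_add (le_iSup (fun i => (S.level i : ℕ∞)) _)
    (le_iSup (fun j => (T.level j : ℕ∞)) _)

end Prod

/-- For separated schemes `X` and `Y` of finite type over a field `k`,
`asn (X ×ₖ Y) ≤ asn X + asn Y`. -/
theorem affineStratificationNumber_product_le
    (X Y : Scheme.{u}) [X.IsSeparated] [Y.IsSeparated]
    (k : Type u) [Field k]
    (sX : X ⟶ Spec (CommRingCat.of k)) [LocallyOfFiniteType sX]
    (sY : Y ⟶ Spec (CommRingCat.of k)) [LocallyOfFiniteType sY] :
    affineStratificationNumber (Limits.pullback sX sY) ≤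
      affineStratificationNumber X + affineStratificationNumber Y := by
  cases isEmpty_or_nonempty (AffineStratification X) with
  | inl h =>
    have hX : affineStratificationNumber X = ⊤ := by
      rw [affineStratificationNumber]; exact iInf_of_empty _
    rw [hX]; simp
  | inr hX =>
    cases isEmpty_or_nonempty (AffineStratification Y) with
    | inl h =>
      have hY : affineStratificationNumber Y = ⊤ := by
        rw [affineStratificationNumber]; exact iInf_of_empty _
      rw [hY]; simp
    | inr hY =>
      obtain ⟨S, hS⟩ := exists_eq_iInf_enat (fun S : AffineStratification X => S.length)
      obtain ⟨T, hT⟩ := exists_eq_iInf_enat (fun T : AffineStratification Y => T.length)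
      calc affineStratificationNumber (Limits.pullback sX sY)
          ≤ (S.prod sX sY T).length := iInf_le _ _
        _ ≤ S.length + T.length := S.prod_length_le sX sY T
        _ = _ := by rw [affineStratificationNumber, affineStratificationNumber, ← hS, ← hT]
end
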